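/- Let n ≥ 1 be an integer, s ∈ (0,1), ε ≥ 0, χ ∈ ℂⁿ and θ ∈ ℝ with |θ| ≤ 2π. Then Jac(Γ_s^ε)(χ,θ) ≥ s^{2n+3}·Jac(Γ_1^ε)(χ,θ); that is, the ratio of Jacobians Jac(Γ_s^ε)/(s^{2n+1}·Jac(Γ_1^ε)) is bounded below by s² wherever Jac(Γ_1^ε) is positive. -/

import Mathlib

open Real

/-- The Jacobian determinant `Jac(Γ_s^ε)(χ,θ)` of the geodesic-endpoint map `Γ_s^ε` of the
Riemannian approximation `M^ε` of `ℍⁿ`, given by its closed formula (valid for `|θ| ≤ 2π`). -/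
noncomputable def heisenbergJacGamma (n : ℕ) (s ε : ℝ)
    (χ : EuclideanSpace ℂ (Fin n)) (θ : ℝ) : ℝ :=
  if θ = 0 then s ^ (2 * n + 3) * ‖χ‖ ^ 2 / 3 + s ^ (2 * n + 1) * ε ^ 2 / 4
  else
    2 ^ (2 * n + 2) * s * ‖χ‖ ^ 2 * (Real.sin (θ * s / 2) / θ) ^ (2 * n - 1) *
        ((Real.sin (θ * s / 2) - θ * s / 2 * Real.cos (θ * s / 2)) / θ ^ 3) +
      2 ^ (2 * n) * (ε ^ 2 / 4) * s * (Real.sin (θ * s / 2) / θ) ^ (2 * n)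

/-!
For `θ ≠ 0` and `t = θ/2`, the Jacobian is, up to the common factor `s (2/θ)^{2n}`,
`a sin(st)^{2n-1} g(st) + b sin(st)^{2n}` with `g u = sin u - u cos u` and `a, b ≥ 0`.
On `[0, π]` concavity of `sin` gives `sin(st) ≥ s sin t`; since `g' u = u sin u`, the same
inequality makes `t ↦ g(st) - s³ g(t)` nondecreasing, so `g(st) ≥ s³ g(t) ≥ 0`. Multiplying
these bounds produces the factor `s^{2n+2}`, and negative `θ` reduce to positive ones because
the Jacobian is even in `θ`.
-/

open Set

lemma monotoneOn_Icc_of_hasDerivAt_nonneg {f f' : ℝ → ℝ} {a b : ℝ}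
    (hf : ∀ x, HasDerivAt f (f' x) x) (hf' : ∀ x ∈ Ioo a b, 0 ≤ f' x) :
    MonotoneOn f (Icc a b) :=
  monotoneOn_of_hasDerivWithinAt_nonneg (convex_Icc a b)
    (fun x _ ↦ (hf x).continuousAt.continuousWithinAt) (fun x _ ↦ (hf x).hasDerivWithinAt)
    (by simpa only [interior_Icc] using hf')

namespace Real

lemma mul_sin_le_sin_mul {s x : ℝ} (hs₀ : 0 ≤ s) (hs₁ : s ≤ 1) (hx₀ : 0 ≤ x)
    (hxπ : x ≤ π) : s * sin x ≤ sin (s * x) := by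
  simpa using strictConcaveOn_sin_Icc.concaveOn.2 (x := 0) (y := x)
    ⟨le_rfl, pi_pos.le⟩ ⟨hx₀, hxπ⟩ (sub_nonneg.2 hs₁) hs₀ (by ring)

lemma hasDerivAt_sin_sub_mul_cos (x : ℝ) :
    HasDerivAt (fun u ↦ sin u - u * cos u) (x * sin x) x :=
  ((hasDerivAt_sin x).sub ((hasDerivAt_id' x).mul (hasDerivAt_cos x))).congr_deriv
    (by ring)

lemma sin_sub_mul_cos_nonneg {t : ℝ} (ht₀ : 0 ≤ t) (htπ : t ≤ π) :
    0 ≤ sin t - t * cos t := by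
  have hmono := monotoneOn_Icc_of_hasDerivAt_nonneg hasDerivAt_sin_sub_mul_cos
    fun x hx ↦ mul_nonneg hx.1.le (sin_nonneg_of_nonneg_of_le_pi hx.1.le hx.2.le)
  simpa using hmono ⟨le_rfl, pi_pos.le⟩ ⟨ht₀, htπ⟩ ht₀

lemma pow_three_mul_sin_sub_mul_cos_le {s t : ℝ} (hs₀ : 0 ≤ s) (hs₁ : s ≤ 1) (ht₀ : 0 ≤ t)
    (htπ : t ≤ π) :
    s ^ 3 * (sin t - t * cos t) ≤ sin (s * t) - s * t * cos (s * t) := by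
  have hderiv (x : ℝ) : HasDerivAt
      (fun u ↦ sin (s * u) - s * u * cos (s * u) - s ^ 3 * (sin u - u * cos u))
      (s ^ 2 * x * (sin (s * x) - s * sin x)) x :=
    (((hasDerivAt_sin_sub_mul_cos (s * x)).comp x ((hasDerivAt_id' x).const_mul s)).sub
      ((hasDerivAt_sin_sub_mul_cos x).const_mul (s ^ 3))).congr_deriv (by ring)
  have hmono := monotoneOn_Icc_of_hasDerivAt_nonneg hderiv fun x hx ↦
    mul_nonneg (mul_nonneg (sq_nonneg s) hx.1.le)
      (sub_nonneg.2 (mul_sin_le_sin_mul hs₀ hs₁ hx.1.le hx.2.le))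
  simpa using hmono ⟨le_rfl, pi_pos.le⟩ ⟨ht₀, htπ⟩ ht₀

end Real

noncomputable def heisenbergJacKernel (n : ℕ) (a b u : ℝ) : ℝ :=
  a * sin u ^ (2 * n - 1) * (sin u - u * cos u) + b * sin u ^ (2 * n)

lemma heisenbergJacGamma_of_ne_zero {n : ℕ} (hn : 1 ≤ n) (s ε : ℝ)
    (χ : EuclideanSpace ℂ (Fin n)) {θ : ℝ} (hθ : θ ≠ 0) :
    heisenbergJacGamma n s ε χ θ =
      s * (2 / θ) ^ (2 * n) *
        heisenbergJacKernel n ((2 / θ) ^ 2 * ‖χ‖ ^ 2) (ε ^ 2 / 4) (s * (θ / 2)) := by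
  obtain ⟨k, hk⟩ : ∃ k, 2 * n = k + 1 := ⟨2 * n - 1, by omega⟩
  rw [heisenbergJacGamma, if_neg hθ, heisenbergJacKernel, show 2 * n + 2 = k + 3 by omega, hk,
    Nat.add_sub_cancel, show θ * s / 2 = s * (θ / 2) by ring]
  ring

lemma pow_mul_heisenbergJacKernel_le {n : ℕ} (hn : 1 ≤ n) {a b s t : ℝ} (ha : 0 ≤ a)
    (hb : 0 ≤ b) (hs₀ : 0 ≤ s) (hs₁ : s ≤ 1) (ht₀ : 0 ≤ t) (htπ : t ≤ π) :
    s ^ (2 * n + 2) * heisenbergJacKernel n a b t ≤ heisenbergJacKernel n a b (s * t) := by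
  obtain ⟨k, hk⟩ : ∃ k, 2 * n = k + 1 := ⟨2 * n - 1, by omega⟩
  rw [show 2 * n + 2 = k + 3 by omega, heisenbergJacKernel, heisenbergJacKernel, hk,
    Nat.add_sub_cancel]
  have hsin : s * sin t ≤ sin (s * t) := mul_sin_le_sin_mul hs₀ hs₁ ht₀ htπ
  have hsin₀ : 0 ≤ s * sin t := mul_nonneg hs₀ (sin_nonneg_of_nonneg_of_le_pi ht₀ htπ)
  have hst : s * t ≤ π := (mul_le_of_le_one_left ht₀ hs₁).trans htπ
  have hodd : (s * sin t) ^ k * (s ^ 3 * (sin t - t * cos t)) ≤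
      sin (s * t) ^ k * (sin (s * t) - s * t * cos (s * t)) :=
    mul_le_mul_of_nonneg (pow_le_pow_left₀ hsin₀ hsin k)
      (pow_three_mul_sin_sub_mul_cos_le hs₀ hs₁ ht₀ htπ) (pow_nonneg hsin₀ k)
      (sin_sub_mul_cos_nonneg (mul_nonneg hs₀ ht₀) hst)
  have heven : s ^ 2 * (s * sin t) ^ (k + 1) ≤ sin (s * t) ^ (k + 1) :=
    (mul_le_of_le_one_left (pow_nonneg hsin₀ _) (pow_le_one₀ hs₀ hs₁)).trans
      (pow_le_pow_left₀ hsin₀ hsin _)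
  calc s ^ (k + 3) * (a * sin t ^ k * (sin t - t * cos t) + b * sin t ^ (k + 1))
      = a * ((s * sin t) ^ k * (s ^ 3 * (sin t - t * cos t))) +
          b * (s ^ 2 * (s * sin t) ^ (k + 1)) := by ring
    _ ≤ a * (sin (s * t) ^ k * (sin (s * t) - s * t * cos (s * t))) +
          b * sin (s * t) ^ (k + 1) := by gcongr
    _ = _ := by ring

lemma heisenbergJacGamma_neg (n : ℕ) (s ε : ℝ) (χ : EuclideanSpace ℂ (Fin n)) (θ : ℝ) :
    heisenbergJacGamma n s ε χ (-θ) = heisenbergJacGamma n s ε χ θ := by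
  simp only [heisenbergJacGamma, neg_eq_zero, neg_mul, neg_div, sin_neg, cos_neg, div_neg,
    neg_neg]
  split_ifs <;> ring

theorem heisenbergJacGamma_ge_general (n : ℕ) (hn : 1 ≤ n) (s ε : ℝ) (hs : s ∈ Set.Ioo (0 : ℝ) 1)
    (χ : EuclideanSpace ℂ (Fin n)) (θ : ℝ) (hθ : |θ| ≤ 2 * Real.pi) :
    s ^ (2 * n + 3) * heisenbergJacGamma n 1 ε χ θ ≤ heisenbergJacGamma n s ε χ θ := by
  obtain ⟨hs₀, hs₁⟩ := hs
  wlog hθ₀ : 0 ≤ θ generalizing θ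
  · simpa only [heisenbergJacGamma_neg] using this (-θ) (by rwa [abs_neg]) (by linarith)
  rcases hθ₀.eq_or_lt with rfl | hθpos
  · have hpow : s ^ (2 * n + 3) ≤ s ^ (2 * n + 1) :=
      pow_le_pow_of_le_one hs₀.le hs₁.le (by omega)
    rw [heisenbergJacGamma, heisenbergJacGamma, if_pos rfl, if_pos rfl]
    simp only [one_pow, one_mul, mul_add, mul_div_assoc]
    gcongr
  · have hθπ : θ / 2 ≤ π := by rw [abs_of_nonneg hθ₀] at hθ; linarith
    have hkernel := pow_mul_heisenbergJacKernel_le hn (a := (2 / θ) ^ 2 * ‖χ‖ ^ 2)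
      (b := ε ^ 2 / 4) (by positivity) (by positivity) hs₀.le hs₁.le (by positivity) hθπ
    rw [heisenbergJacGamma_of_ne_zero hn _ _ _ hθpos.ne',
      heisenbergJacGamma_of_ne_zero hn _ _ _ hθpos.ne', one_mul, one_mul, pow_succ]
    linarith [mul_le_mul_of_nonneg_left hkernel (by positivity : 0 ≤ s * (2 / θ) ^ (2 * n))]

/-- For `n ≥ 1`, `s ∈ (0,1)`, `ε ≥ 0`, `χ ∈ ℂⁿ` and `|θ| ≤ 2π`, one has
`Jac(Γ_s^ε)(χ,θ) ≥ s^{2n+3} · Jac(Γ_1^ε)(χ,θ)`. -/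
theorem heisenbergJacGamma_ge (n : ℕ) (hn : 1 ≤ n) (s ε : ℝ) (hs : s ∈ Set.Ioo (0 : ℝ) 1)
    (hε : 0 ≤ ε) (χ : EuclideanSpace ℂ (Fin n)) (θ : ℝ) (hθ : |θ| ≤ 2 * Real.pi) :
    s ^ (2 * n + 3) * heisenbergJacGamma n 1 ε χ θ ≤ heisenbergJacGamma n s ε χ θ :=
  heisenbergJacGamma_ge_general n hn s ε hs χ θ hθ
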